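/- Caristi's fixed point theorem on a d_{ε,λ}-complete RM space: Let (E,d) be a d_{ε,λ}-complete random metric space with base (Ω,𝓕,P), φ : E → L̄⁰(𝓕) a proper, 𝒯_{ε,λ}-lower semicontinuous function which is bounded from below, and T : E → E a mapping such that φ(Tu) + d(Tu,u) ≤ φ(u) for all u ∈ E. Then T has a fixed point. -/

import Mathlib

open MeasureTheory ENNReal Set Filter

namespace GYY

variable {Ω : Type*} [MeasurableSpace Ω]

/-- `L⁰(𝓕)`: equivalence classes of real-valued random variables on `(Ω,𝓕,P)`. -/
abbrev L0 (P : Measure Ω) := Ω →ₘ[P] ℝ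

/-- `L̄⁰(𝓕)`: equivalence classes of extended-real-valued random variables. -/
abbrev L0e (P : Measure Ω) := Ω →ₘ[P] EReal

/-- `L⁰₊₊(𝓕)`: the (classes of) random variables that are strictly positive a.s. -/
def L0pp (P : Measure Ω) : Set (L0 P) := {ε | ∀ᵐ ω ∂P, 0 < ε ω}

/-- The equivalence class `Ĩ_A` of the indicator function of a measurable set `A`. -/
noncomputable def indL0 (P : Measure Ω) (A : Set Ω) (hA : MeasurableSet A) : L0 P :=
  AEEqFun.mk (A.indicator fun _ => (1 : ℝ)) (aestronglyMeasurable_const.indicator hA)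

/-- A random metric space (RM space) with base `(Ω,𝓕,P)`. -/
structure RMSpace (P : Measure Ω) (E : Type*) where
  d : E → E → L0 P
  d_nonneg : ∀ p q, ∀ᵐ ω ∂P, 0 ≤ d p q ω
  d_eq_zero_iff : ∀ p q, d p q = 0 ↔ p = q
  d_symm : ∀ p q, d p q = d q p
  d_triangle : ∀ p q r, ∀ᵐ ω ∂P, d p r ω ≤ d p q ω + d q r ω

/-- Convergence in probability `P` of a sequence in `L⁰(𝓕)`, i.e. convergence in the
`(ε,λ)`-topology of `L⁰(𝓕)` with the random metric `d(p,q) = |p - q|`. -/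
def TendstoProb (P : Measure Ω) (r : ℕ → L0 P) (s : L0 P) : Prop :=
  ∀ ε : ℝ, 0 < ε → ∀ lam ∈ Ioo (0 : ℝ) 1, ∃ N : ℕ, ∀ n ≥ N,
    ENNReal.ofReal (1 - lam) < P {ω | |r n ω - s ω| < ε}

namespace RMSpace

variable {P : Measure Ω} {E : Type*} (M : RMSpace P E)

/-- Convergence of a sequence in the `(ε,λ)`-topology of an RM space. -/
def TendstoEL (x : ℕ → E) (a : E) : Prop :=
  ∀ ε : ℝ, 0 < ε → ∀ lam ∈ Ioo (0 : ℝ) 1, ∃ N : ℕ, ∀ n ≥ N,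
    ENNReal.ofReal (1 - lam) < P {ω | M.d (x n) a ω < ε}

/-- Cauchy sequence for the `d_{ε,λ}`-uniformity of an RM space. -/
def CauchySeqEL (x : ℕ → E) : Prop :=
  ∀ ε : ℝ, 0 < ε → ∀ lam ∈ Ioo (0 : ℝ) 1, ∃ N : ℕ, ∀ m ≥ N, ∀ n ≥ N,
    ENNReal.ofReal (1 - lam) < P {ω | M.d (x m) (x n) ω < ε}

/-- `d_{ε,λ}`-completeness of an RM space (the `d_{ε,λ}`-uniformity is metrizable, hence
completeness is equivalent to sequential completeness). -/
def CompleteEL : Prop := ∀ x : ℕ → E, M.CauchySeqEL x → ∃ a, M.TendstoEL x a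

/-- `φ : E → L̄⁰(𝓕)` is `𝒯_{ε,λ}`-lower semicontinuous: its epigraph
`epi(φ) = {(x,r) ∈ E × L⁰ : φ(x) ≤ r}` is closed in
`(E,𝒯_{ε,λ}) × (L⁰(𝓕),𝒯_{ε,λ})` (sequentially; both topologies are metrizable). -/
def LscEL (φ : E → L0e P) : Prop :=
  ∀ (x : ℕ → E) (r : ℕ → L0 P) (a : E) (s : L0 P),
    (∀ n, ∀ᵐ ω ∂P, φ (x n) ω ≤ (r n ω : EReal)) →
    M.TendstoEL x a → TendstoProb P r s →
    ∀ᵐ ω ∂P, φ a ω ≤ (s ω : EReal)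

end RMSpace

/-- `φ` is proper on `G`: `φ(x) > -∞` a.s. for every `x ∈ G`, and `φ(x) < +∞` a.s.
for some `x ∈ G`. -/
def ProperOn {E : Type*} {P : Measure Ω} (φ : E → L0e P) (G : Set E) : Prop :=
  (∀ x ∈ G, ∀ᵐ ω ∂P, ⊥ < φ x ω) ∧ ∃ x ∈ G, ∀ᵐ ω ∂P, φ x ω < ⊤

/-- `φ` is bounded from below on `G` by an element of `L⁰(𝓕)`. -/
def BddBelowOn {E : Type*} {P : Measure Ω} (φ : E → L0e P) (G : Set E) : Prop :=
  ∃ ξ : L0 P, ∀ x ∈ G, ∀ᵐ ω ∂P, (ξ ω : EReal) ≤ φ x ω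

/-- `φ` is bounded from above on `G` by an element of `L⁰(𝓕)`. -/
def BddAboveOn {E : Type*} {P : Measure Ω} (φ : E → L0e P) (G : Set E) : Prop :=
  ∃ ξ : L0 P, ∀ x ∈ G, ∀ᵐ ω ∂P, φ x ω ≤ (ξ ω : EReal)

/-- `η = ⋀ φ(G)`, the infimum of `φ(G)` in the complete lattice `L̄⁰(𝓕)`. -/
def IsInfOn {E : Type*} {P : Measure Ω} (φ : E → L0e P) (G : Set E) (η : L0e P) : Prop :=
  (∀ x ∈ G, ∀ᵐ ω ∂P, η ω ≤ φ x ω) ∧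
    ∀ ζ : L0e P, (∀ x ∈ G, ∀ᵐ ω ∂P, ζ ω ≤ φ x ω) → ∀ᵐ ω ∂P, ζ ω ≤ η ω

/-- `η = ⋁ φ(G)`, the supremum of `φ(G)` in the complete lattice `L̄⁰(𝓕)`. -/
def IsSupOn {E : Type*} {P : Measure Ω} (φ : E → L0e P) (G : Set E) (η : L0e P) : Prop :=
  (∀ x ∈ G, ∀ᵐ ω ∂P, φ x ω ≤ η ω) ∧
    ∀ ζ : L0e P, (∀ x ∈ G, ∀ᵐ ω ∂P, φ x ω ≤ ζ ω) → ∀ᵐ ω ∂P, η ω ≤ ζ ω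

/-- `s = ⋁ g(G)` for an `L⁰(𝓕)`-valued function `g`. -/
def IsSupOnR {E : Type*} {P : Measure Ω} (g : E → L0 P) (G : Set E) (s : L0 P) : Prop :=
  (∀ x ∈ G, ∀ᵐ ω ∂P, g x ω ≤ s ω) ∧
    ∀ c : L0 P, (∀ x ∈ G, ∀ᵐ ω ∂P, g x ω ≤ c ω) → ∀ᵐ ω ∂P, s ω ≤ c ω

/-- The Cauchy property (for the `d_{ε,λ}`-uniformity of `L⁰(𝓕)`, i.e. the uniformity of
convergence in probability) of the net `{φ(m) : m ∈ M}` indexed by `M` directed by the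
order of `X`. -/
def CauchyNetProb {X : Type*} [Preorder X] {P : Measure Ω} (φ : X → L0e P) (M : Set X) : Prop :=
  ∀ ε : ℝ, 0 < ε → ∀ lam ∈ Ioo (0 : ℝ) 1, ∃ m₀ ∈ M, ∀ m₁ ∈ M, ∀ m₂ ∈ M,
    m₀ ≤ m₁ → m₀ ≤ m₂ →
      ENNReal.ofReal (1 - lam) < P {ω | |(φ m₁ ω).toReal - (φ m₂ ω).toReal| < ε}

/-- The section filter of the net `{x_g : g ∈ G}`, `x_g = g`, indexed by `G` directed by the
order of `X`; the net is Cauchy iff this filter is a Cauchy filter. -/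
def netFilter {X : Type*} [Preorder X] (G : Set X) : Filter X :=
  ⨅ g ∈ G, 𝓟 {y | y ∈ G ∧ g ≤ y}

/-- A random normed module (RN module) over `ℝ` with base `(Ω,𝓕,P)`: a left module `E`
over the algebra `L⁰(𝓕)` together with an `L⁰`-norm. -/
structure RNModule (P : Measure Ω) (E : Type*) [AddCommGroup E] where
  smul : L0 P → E → E
  one_smul : ∀ x, smul 1 x = x
  mul_smul : ∀ ξ η x, smul (ξ * η) x = smul ξ (smul η x)
  smul_add : ∀ ξ x y, smul ξ (x + y) = smul ξ x + smul ξ y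
  add_smul : ∀ ξ η x, smul (ξ + η) x = smul ξ x + smul η x
  nm : E → L0 P
  nm_nonneg : ∀ x, ∀ᵐ ω ∂P, 0 ≤ nm x ω
  nm_eq_zero_iff : ∀ x, nm x = 0 ↔ x = 0
  nm_smul : ∀ ξ x, ∀ᵐ ω ∂P, nm (smul ξ x) ω = |ξ ω| * nm x ω
  nm_add_le : ∀ x y, ∀ᵐ ω ∂P, nm (x + y) ω ≤ nm x ω + nm y ω

/-- The `𝒯_c`-neighbourhood filter of a point `r` of `L⁰(𝓕)`, with base the closed balls
`{s : |s - r| ≤ ε}`, `ε ∈ L⁰₊₊`. -/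
def cNhdsL0 (P : Measure Ω) (r : L0 P) : Filter (L0 P) :=
  ⨅ ε ∈ L0pp P, 𝓟 {s | ∀ᵐ ω ∂P, |s ω - r ω| ≤ ε ω}

namespace RNModule

variable {P : Measure Ω} {E : Type*} [AddCommGroup E] (N : RNModule P E)

/-- Convergence of sequences in the `(ε,λ)`-topology `𝒯_{ε,λ}` of an RN module. -/
def TendstoEL (x : ℕ → E) (a : E) : Prop :=
  ∀ ε : ℝ, 0 < ε → ∀ lam ∈ Ioo (0 : ℝ) 1, ∃ N' : ℕ, ∀ n ≥ N',
    ENNReal.ofReal (1 - lam) < P {ω | N.nm (x n - a) ω < ε}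

/-- Cauchy sequence for the `d_{ε,λ}`-uniformity of an RN module. -/
def CauchySeqEL (x : ℕ → E) : Prop :=
  ∀ ε : ℝ, 0 < ε → ∀ lam ∈ Ioo (0 : ℝ) 1, ∃ N' : ℕ, ∀ m ≥ N', ∀ n ≥ N',
    ENNReal.ofReal (1 - lam) < P {ω | N.nm (x m - x n) ω < ε}

/-- `𝒯_{ε,λ}`-completeness (the `d_{ε,λ}`-uniformity is metrizable, hence completeness is
equivalent to sequential completeness). -/
def CompleteEL : Prop := ∀ x : ℕ → E, N.CauchySeqEL x → ∃ a, N.TendstoEL x a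

/-- `G` is `𝒯_{ε,λ}`-closed (sequentially; `𝒯_{ε,λ}` is metrizable). -/
def ClosedEL (G : Set E) : Prop :=
  ∀ (x : ℕ → E) (a : E), (∀ n, x n ∈ G) → N.TendstoEL x a → a ∈ G

/-- `φ : G → L̄⁰(𝓕)` is `𝒯_{ε,λ}`-lower semicontinuous on `G`: its epigraph
`{(x,r) ∈ G × L⁰ : φ(x) ≤ r}` is closed in `(G,𝒯_{ε,λ}) × (L⁰(𝓕),𝒯_{ε,λ})`. -/
def LscELOn (φ : E → L0e P) (G : Set E) : Prop :=
  ∀ (x : ℕ → E) (r : ℕ → L0 P) (a : E) (s : L0 P),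
    (∀ n, x n ∈ G) → a ∈ G →
    (∀ n, ∀ᵐ ω ∂P, φ (x n) ω ≤ (r n ω : EReal)) →
    N.TendstoEL x a → TendstoProb P r s →
    ∀ᵐ ω ∂P, φ a ω ≤ (s ω : EReal)

/-- The neighbourhood filter of `x` in the locally `L⁰`-convex topology `𝒯_c`,
whose base consists of the closed balls `{y : ‖y - x‖ ≤ ε}`, `ε ∈ L⁰₊₊`. -/
def cNhds (x : E) : Filter E :=
  ⨅ ε ∈ L0pp P, 𝓟 {y | ∀ᵐ ω ∂P, N.nm (y - x) ω ≤ ε ω}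

/-- The `d_c`-uniformity of an RN module, with base `{U(ε) : ε ∈ L⁰₊₊}`,
`U(ε) = {(p,q) : ‖p - q‖ ≤ ε}`. -/
def cUniformity : Filter (E × E) :=
  ⨅ ε ∈ L0pp P, 𝓟 {p | ∀ᵐ ω ∂P, N.nm (p.1 - p.2) ω ≤ ε ω}

/-- `𝒯_c`-completeness: every Cauchy filter for the `d_c`-uniformity converges. -/
def cComplete : Prop :=
  ∀ F : Filter E, F.NeBot → F ×ˢ F ≤ N.cUniformity → ∃ x, F ≤ N.cNhds x

/-- The `𝒯_c`-closure of a subset. -/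
def cClosure (G : Set E) : Set E := {x | (N.cNhds x ⊓ 𝓟 G).NeBot}

/-- `G` is `𝒯_c`-closed. -/
def cClosed (G : Set E) : Prop := ∀ x, x ∈ N.cClosure G → x ∈ G

/-- `S` is `𝒯_c`-dense in `T`. -/
def cDenseIn (S T : Set E) : Prop := ∀ x ∈ T, x ∈ N.cClosure S

/-- The `𝒯_c`-boundary `∂_c G`. -/
def cBoundary (G : Set E) : Set E := N.cClosure G ∩ N.cClosure Gᶜ

/-- `φ : G → L̄⁰(𝓕)` is `𝒯_c`-lower semicontinuous on `G`: its epigraph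
`{(x,r) ∈ G × L⁰ : φ(x) ≤ r}` is closed in `(G,𝒯_c) × (L⁰(𝓕),𝒯_c)`. -/
def cLscOn (φ : E → L0e P) (G : Set E) : Prop :=
  ∀ (a : E) (s : L0 P), a ∈ G →
    ((N.cNhds a ×ˢ cNhdsL0 P s) ⊓
      𝓟 {p : E × L0 P | p.1 ∈ G ∧ ∀ᵐ ω ∂P, φ p.1 ω ≤ (p.2 ω : EReal)}).NeBot →
    ∀ᵐ ω ∂P, φ a ω ≤ (s ω : EReal)

/-- The countable concatenation property of a subset `G` of an RN module. -/
def HasCC (G : Set E) : Prop :=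
  ∀ (x : ℕ → E), (∀ n, x n ∈ G) →
    ∀ (A : ℕ → Set Ω) (hA : ∀ n, MeasurableSet (A n)),
      (∀ i j, i ≠ j → Disjoint (A i) (A j)) → (⋃ n, A n) = univ →
        ∃ y ∈ G, ∀ n, N.smul (indL0 P (A n) (hA n)) y = N.smul (indL0 P (A n) (hA n)) (x n)

/-- The countable concatenation property of a subset of the product `L⁰(𝓕)`-module
`E × L⁰(𝓕)` (with componentwise module operations). -/
def HasCCProd (G : Set (E × L0 P)) : Prop :=
  ∀ (p : ℕ → E × L0 P), (∀ n, p n ∈ G) →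
    ∀ (A : ℕ → Set Ω) (hA : ∀ n, MeasurableSet (A n)),
      (∀ i j, i ≠ j → Disjoint (A i) (A j)) → (⋃ n, A n) = univ →
        ∃ q ∈ G, ∀ n,
          N.smul (indL0 P (A n) (hA n)) q.1 = N.smul (indL0 P (A n) (hA n)) (p n).1 ∧
          indL0 P (A n) (hA n) * q.2 = indL0 P (A n) (hA n) * (p n).2

/-- The local property of an `L̄⁰(𝓕)`-valued function:
`Ĩ_A·φ(x) = Ĩ_A·φ(Ĩ_A·x)` for all `x ∈ E`, `A ∈ 𝓕`, i.e. `φ(x) = φ(Ĩ_A x)` a.s. on `A`. -/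
def LocalProp (φ : E → L0e P) : Prop :=
  ∀ (x : E) (A : Set Ω) (hA : MeasurableSet A),
    ∀ᵐ ω ∂P, ω ∈ A → φ x ω = φ (N.smul (indL0 P A hA) x) ω

/-- `G` is `L⁰(𝓕)`-convex. -/
def L0Convex (G : Set E) : Prop :=
  ∀ x ∈ G, ∀ y ∈ G, ∀ ξ η : L0 P,
    (∀ᵐ ω ∂P, 0 ≤ ξ ω) → (∀ᵐ ω ∂P, 0 ≤ η ω) → ξ + η = 1 →
      N.smul ξ x + N.smul η y ∈ G

/-- `G` is a.s. bounded: `⋁{‖p‖ : p ∈ G} ∈ L⁰₊(𝓕)`. -/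
def ASBounded (G : Set E) : Prop :=
  ∃ ξ : L0 P, ∀ p ∈ G, ∀ᵐ ω ∂P, N.nm p ω ≤ ξ ω

/-- Membership in the random conjugate space `E*`: `f` is an a.s. bounded random linear
functional, i.e. an `L⁰(𝓕)`-linear map `f : E → L⁰(𝓕)` with `|f(x)| ≤ ξ·‖x‖` for all `x`
for some `ξ ∈ L⁰₊(𝓕)`. -/
def IsDual (f : E → L0 P) : Prop :=
  (∀ x y, f (x + y) = f x + f y) ∧
  (∀ (ξ : L0 P) (x : E), f (N.smul ξ x) = ξ * f x) ∧
  ∃ ξ : L0 P, (∀ᵐ ω ∂P, 0 ≤ ξ ω) ∧ ∀ x, ∀ᵐ ω ∂P, |f x ω| ≤ ξ ω * N.nm x ω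

/-- `nf = ‖f‖* := ⋀{ξ ∈ L⁰₊ : |f(x)| ≤ ξ‖x‖ for all x ∈ E}`, the random norm of `E*`. -/
def IsDualNorm (f : E → L0 P) (nf : L0 P) : Prop :=
  (∀ ξ : L0 P, ((∀ᵐ ω ∂P, 0 ≤ ξ ω) ∧ ∀ x, ∀ᵐ ω ∂P, |f x ω| ≤ ξ ω * N.nm x ω) →
    ∀ᵐ ω ∂P, nf ω ≤ ξ ω) ∧
  (∀ c : L0 P,
    (∀ ξ : L0 P, ((∀ᵐ ω ∂P, 0 ≤ ξ ω) ∧ ∀ x, ∀ᵐ ω ∂P, |f x ω| ≤ ξ ω * N.nm x ω) →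
      ∀ᵐ ω ∂P, c ω ≤ ξ ω) → ∀ᵐ ω ∂P, c ω ≤ nf ω)

/-- The cone `K(f,k) = {y ∈ E : k‖y‖ ≤ f(y)}`. -/
def Kcone (f : E → L0 P) (k : L0 P) : Set E := {y | ∀ᵐ ω ∂P, k ω * N.nm y ω ≤ f y ω}

/-- `f ∈ E*∖{0}`, bounded from above on `G`, supports `G` at some point:
`f(x) = ⋁f(G)` for some `x ∈ G`. -/
def Supports (G : Set E) (f : E → L0 P) : Prop :=
  N.IsDual f ∧ f ≠ 0 ∧ (∃ ξ : L0 P, ∀ x ∈ G, ∀ᵐ ω ∂P, f x ω ≤ ξ ω) ∧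
    ∃ x ∈ G, IsSupOnR f G (f x)

/-- The set of support points of `G`: points `x ∈ G` at which some
`f ∈ E*∖{0}`, bounded from above on `G`, attains `f(x) = ⋁f(G)`. -/
def SupportPoints (G : Set E) : Set E :=
  {x | x ∈ G ∧ ∃ f : E → L0 P, N.IsDual f ∧ f ≠ 0 ∧
    (∃ ξ : L0 P, ∀ y ∈ G, ∀ᵐ ω ∂P, f y ω ≤ ξ ω) ∧ IsSupOnR f G (f x)}

end RNModule

/-!
The order `v ≼ u :⇔ φ(v) + d(v,u) ≤ φ(u)` is scalarized by `Φ(y) = E[w · φ(y)]`, where the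
weight `w = (1 + |ξ| + |φ(x₀)|)⁻¹` keeps `w · φ` bounded on `{y ≼ x₀}`. Choosing
`x_{n+1} ≼ x_n` with `Φ(x_{n+1}) < inf {Φ(y) : y ≼ x_n} + 2⁻ⁿ` (Brézis–Browder) gives
`E[w · d(x_m, x_n)] ≤ 2⁻ⁿ` for `m ≥ n`; as `w > 0`, `(x_n)` is Cauchy in probability and
converges to some `a`. The reals `φ(x_n)` decrease a.s.; lower semicontinuity and the closedness
of random balls then give `a ≼ x_n` for every `n`, so any `v ≼ a` has
`E[w · d(v,a)] ≤ Φ(a) - Φ(v) ≤ 0`, i.e. `v = a`. Since `T a ≼ a`, `T a = a`.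
-/

open Topology

section Probability

variable {Ω : Type*} [MeasurableSpace Ω] {P : Measure Ω}

theorem ofReal_one_sub_lt_iff_measure_compl_lt [IsProbabilityMeasure P] {S : Set Ω}
    (hS : NullMeasurableSet S P) {lam : ℝ} (h0 : 0 ≤ lam) (h1 : lam ≤ 1) :
    ENNReal.ofReal (1 - lam) < P S ↔ P Sᶜ < ENNReal.ofReal lam := by
  rw [prob_compl_eq_one_sub₀ hS, ENNReal.ofReal_sub 1 h0, ENNReal.ofReal_one]
  exact ⟨ENNReal.sub_lt_of_sub_lt prob_le_one (.inl ENNReal.one_ne_top),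
    ENNReal.sub_lt_of_sub_lt (ENNReal.ofReal_le_one.2 h1) (.inl ENNReal.one_ne_top)⟩

theorem tendstoInMeasure_iff_forall_ofReal_one_sub_lt [IsProbabilityMeasure P]
    {f : ℕ → Ω → ℝ} {g : Ω → ℝ} (hf : ∀ n, AEStronglyMeasurable (f n) P)
    (hg : AEStronglyMeasurable g P) :
    TendstoInMeasure P f atTop g ↔ ∀ ε : ℝ, 0 < ε → ∀ lam ∈ Ioo (0 : ℝ) 1, ∃ N : ℕ, ∀ n ≥ N,
      ENNReal.ofReal (1 - lam) < P {ω | |f n ω - g ω| < ε} := by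
  have hcompl : ∀ ε n, {ω | |f n ω - g ω| < ε}ᶜ = {ω | ε ≤ dist (f n ω) (g ω)} := by
    intro ε n; ext ω; simp [Real.dist_eq]
  have hmeas : ∀ ε n, NullMeasurableSet {ω | |f n ω - g ω| < ε} P := fun ε n =>
    nullMeasurableSet_lt ((hf n).aemeasurable.sub hg.aemeasurable).abs aemeasurable_const
  have hiff : ∀ ε n, ∀ lam ∈ Ioo (0 : ℝ) 1, ENNReal.ofReal (1 - lam) < P {ω | |f n ω - g ω| < ε}
      ↔ P {ω | ε ≤ dist (f n ω) (g ω)} < ENNReal.ofReal lam := fun ε n lam hlam => by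
    rw [ofReal_one_sub_lt_iff_measure_compl_lt (hmeas ε n) hlam.1.le hlam.2.le, hcompl]
  rw [tendstoInMeasure_iff_dist]
  refine ⟨fun h ε hε lam hlam => ?_, fun h ε hε => ENNReal.tendsto_nhds_zero.2 fun δ hδ => ?_⟩
  · obtain ⟨N, hN⟩ := eventually_atTop.1
      ((h ε hε).eventually (Iio_mem_nhds (ENNReal.ofReal_pos.2 hlam.1)))
    exact ⟨N, fun n hn => (hiff ε n lam hlam).2 (hN n hn)⟩
  · obtain ⟨r, -, hr0, hrδ⟩ := ENNReal.lt_iff_exists_real_btwn.1 hδ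
    have hlam : min r (1 / 2) ∈ Ioo (0 : ℝ) 1 :=
      ⟨lt_min (ENNReal.ofReal_pos.1 hr0) (by norm_num), by linarith [min_le_right r (1 / 2)]⟩
    obtain ⟨N, hN⟩ := h ε hε _ hlam
    filter_upwards [eventually_ge_atTop N] with n hn
    calc P {ω | ε ≤ dist (f n ω) (g ω)} ≤ ENNReal.ofReal (min r (1 / 2)) :=
          ((hiff ε n _ hlam).1 (hN n hn)).le
      _ ≤ δ := (ENNReal.ofReal_le_ofReal (min_le_left _ _)).trans hrδ.le

theorem exists_pos_measure_le_lt_of_integral_mul_le [IsFiniteMeasure P] {w : Ω → ℝ}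
    (hw : Measurable w) (hw_pos : ∀ ω, 0 < w ω) {ε lam : ℝ} (hε : 0 < ε) (hlam : 0 < lam) :
    ∃ δ > 0, ∀ f : Ω → ℝ, 0 ≤ᵐ[P] f → Integrable (fun ω => w ω * f ω) P →
      ∫ ω, w ω * f ω ∂P ≤ δ → P {ω | ε ≤ f ω} < ENNReal.ofReal lam := by
  have hsmall : Tendsto (fun k : ℕ => P {ω | w ω < 1 / ((k : ℝ) + 1)}) atTop (𝓝 0) := by
    have hempty : (⋂ k : ℕ, {ω | w ω < 1 / ((k : ℝ) + 1)}) = ∅ := by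
      refine eq_empty_of_forall_notMem fun ω hω => ?_
      obtain ⟨k, hk⟩ := exists_nat_one_div_lt (hw_pos ω)
      exact (mem_iInter.1 hω k).not_gt hk
    have hanti : Antitone fun k : ℕ => {ω | w ω < 1 / ((k : ℝ) + 1)} := fun i j hij ω hω =>
      lt_of_lt_of_le (show w ω < _ from hω) (Nat.one_div_le_one_div hij)
    have h := tendsto_measure_iInter_atTop (μ := P)
      (fun k => (measurableSet_lt hw measurable_const).nullMeasurableSet) hanti
      ⟨0, measure_ne_top _ _⟩
    rwa [hempty, measure_empty] at h
  obtain ⟨k, hk⟩ :=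
    (hsmall.eventually (Iio_mem_nhds (ENNReal.ofReal_pos.2 (half_pos hlam)))).exists
  set c : ℝ := 1 / ((k : ℝ) + 1)
  have hc : 0 < c := Nat.one_div_pos_of_nat
  refine ⟨lam / 2 * (ε * c), by positivity, fun f hf hint hle => ?_⟩
  -- off `{w < c}`, which has measure `< lam / 2`, the event `ε ≤ f` forces `ε * c ≤ w * f`
  have hmarkov : P {ω | ε * c ≤ w ω * f ω} ≤ ENNReal.ofReal (lam / 2) := by
    have h := mul_meas_ge_le_integral_of_nonneg
      (hf.mono fun ω h => mul_nonneg (hw_pos ω).le h) hint (ε * c)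
    rw [← ofReal_measureReal (measure_ne_top _ _)]
    exact ENNReal.ofReal_le_ofReal (le_of_mul_le_mul_left (by linarith) (by positivity : 0 < ε * c))
  have hsub : {ω | ε ≤ f ω} ⊆ {ω | ε * c ≤ w ω * f ω} ∪ {ω | w ω < c} := by
    intro ω (hω : ε ≤ f ω)
    by_cases hwc : w ω < c
    · exact .inr hwc
    · exact .inl (by rw [mul_comm]; exact mul_le_mul (not_lt.1 hwc) hω hε.le (hw_pos ω).le)
  calc P {ω | ε ≤ f ω} ≤ P {ω | ε * c ≤ w ω * f ω} + P {ω | w ω < c} :=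
        (measure_mono hsub).trans (measure_union_le _ _)
    _ < ENNReal.ofReal (lam / 2) + ENNReal.ofReal (lam / 2) :=
        ENNReal.add_lt_add_of_le_of_lt (measure_ne_top _ _) hmarkov hk
    _ = ENNReal.ofReal lam := by rw [← ENNReal.ofReal_add (by linarith) (by linarith), add_halves]

theorem tendstoProb_mk_of_ae_tendsto [IsProbabilityMeasure P] {f : ℕ → Ω → ℝ} {g : Ω → ℝ}
    (hf : ∀ n, AEStronglyMeasurable (f n) P) (hg : AEStronglyMeasurable g P)
    (hfg : ∀ᵐ ω ∂P, Tendsto (fun n => f n ω) atTop (𝓝 (g ω))) :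
    TendstoProb P (fun n => AEEqFun.mk (f n) (hf n)) (AEEqFun.mk g hg) := by
  have h := (tendstoInMeasure_of_tendsto_ae hf hfg).congr
    (fun n => (AEEqFun.coeFn_mk (f n) (hf n)).symm) (AEEqFun.coeFn_mk g hg).symm
  exact (tendstoInMeasure_iff_forall_ofReal_one_sub_lt (fun n => AEEqFun.aestronglyMeasurable _)
    (AEEqFun.aestronglyMeasurable _)).1 h

end Probability

theorem abs_inv_mul_le_one {a b t : ℝ} (ha : a ≤ t) (hb : t ≤ b) :
    |(1 + |a| + |b|)⁻¹ * t| ≤ 1 := by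
  have hpos : 0 < 1 + |a| + |b| := by positivity
  rw [abs_mul, abs_inv, abs_of_pos hpos, inv_mul_le_one₀ hpos]
  cases abs_cases t <;> cases abs_cases a <;> cases abs_cases b <;> linarith

theorem _root_.EReal.toReal_add_le_toReal_of_add_coe_le {a b : EReal} {d : ℝ} (ha : ⊥ < a)
    (hb : b < ⊤) (h : a + d ≤ b) : a < ⊤ ∧ a.toReal + d ≤ b.toReal := by
  induction a using EReal.rec with
  | bot => exact absurd ha (lt_irrefl _)
  | top => exact absurd (h.trans_lt hb) (by simp)
  | coe a =>
    induction b using EReal.rec with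
    | bot => exact absurd h (by rw [← EReal.coe_add]; exact EReal.coe_ne_bot _ ∘ le_bot_iff.1)
    | top => exact absurd hb (lt_irrefl _)
    | coe b => exact ⟨EReal.coe_lt_top a, by exact_mod_cast h⟩

/-- The Brézis–Browder iteration. -/
theorem exists_seq_forall_lt_add {E : Type*} (S : E → Set E) (hrefl : ∀ u, u ∈ S u)
    (htrans : ∀ u v, v ∈ S u → S v ⊆ S u) (Φ : E → ℝ) {x0 : E} (hbdd : BddBelow (Φ '' S x0))
    {δ : ℕ → ℝ} (hδ : ∀ n, 0 < δ n) :
    ∃ x : ℕ → E, x 0 ∈ S x0 ∧ (∀ n, x (n + 1) ∈ S (x n)) ∧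
      ∀ n, ∀ v ∈ S (x n), Φ (x n) < Φ v + δ n := by
  have hstep : ∀ (n : ℕ) (u : S x0), ∃ v : S x0, (v : E) ∈ S u ∧ ∀ z ∈ S v, Φ v < Φ z + δ n := by
    rintro n ⟨u, hu⟩
    have hbdd_u : BddBelow (Φ '' S u) := BddBelow.mono (image_mono (htrans _ _ hu)) hbdd
    obtain ⟨_, ⟨v, hv, rfl⟩, hlt⟩ := exists_lt_of_csInf_lt ⟨Φ u, mem_image_of_mem Φ (hrefl u)⟩
      (lt_add_of_pos_right (sInf (Φ '' S u)) (hδ n))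
    refine ⟨⟨v, htrans _ _ hu hv⟩, hv, fun z hz => hlt.trans_le ?_⟩
    exact add_le_add_left (csInf_le hbdd_u ⟨z, htrans _ _ hv hz, rfl⟩) _
  choose next hnext_mem hnext_lt using hstep
  let y : ℕ → S x0 := fun n => Nat.rec ⟨x0, hrefl x0⟩ next n
  exact ⟨fun n => y (n + 1), (y 1).2, fun n => hnext_mem (n + 1) (y (n + 1)),
    fun n => hnext_lt n (y n)⟩

namespace RMSpace

variable {Ω : Type*} [MeasurableSpace Ω] {P : Measure Ω} {E : Type*} (M : RMSpace P E)

theorem ae_dist_self (p : E) : ∀ᵐ ω ∂P, M.d p p ω = 0 := by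
  rw [(M.d_eq_zero_iff p p).2 rfl]
  exact AEEqFun.coeFn_zero

theorem eq_of_ae_dist_eq_zero {p q : E} (h : ∀ᵐ ω ∂P, M.d p q ω = 0) : p = q :=
  (M.d_eq_zero_iff p q).1 (AEEqFun.ext (EventuallyEq.trans h AEEqFun.coeFn_zero.symm))

/-- The lower set `{v | v ≼ u}` of the Brøndsted order. -/
def caristiSet (φ : E → L0e P) (u : E) : Set E :=
  {v | ∀ᵐ ω ∂P, φ v ω + (M.d v u ω : EReal) ≤ φ u ω}

variable {M} {φ : E → L0e P}

theorem mem_caristiSet_self (u : E) : u ∈ M.caristiSet φ u := by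
  filter_upwards [M.ae_dist_self u] with ω h
  simp [h]

theorem caristiSet_subset {u v : E} (hv : v ∈ M.caristiSet φ u) :
    M.caristiSet φ v ⊆ M.caristiSet φ u := fun z hz => by
  filter_upwards [hv, hz, M.d_triangle z v u] with ω hvu hzv htri
  calc φ z ω + (M.d z u ω : EReal) ≤ φ z ω + (M.d z v ω : EReal) + (M.d v u ω : EReal) := by
        rw [add_assoc, ← EReal.coe_add]; gcongr
    _ ≤ φ u ω := (add_le_add_left hzv _).trans hvu

theorem ae_toReal_add_dist_le {u v : E} (hv : ∀ᵐ ω ∂P, ⊥ < φ v ω) (hu : ∀ᵐ ω ∂P, φ u ω < ⊤)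
    (h : v ∈ M.caristiSet φ u) :
    ∀ᵐ ω ∂P, φ v ω < ⊤ ∧ (φ v ω).toReal + M.d v u ω ≤ (φ u ω).toReal := by
  filter_upwards [hv, hu, h] with ω hv hu h
  exact EReal.toReal_add_le_toReal_of_add_coe_le hv hu h

theorem tendstoInMeasure_dist_of_tendstoEL [IsProbabilityMeasure P] {x : ℕ → E} {a : E}
    (ha : M.TendstoEL x a) : TendstoInMeasure P (fun n => M.d (x n) a) atTop 0 := by
  rw [tendstoInMeasure_iff_forall_ofReal_one_sub_lt (fun n => AEEqFun.aestronglyMeasurable _)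
    aestronglyMeasurable_zero]
  intro ε hε lam hlam
  obtain ⟨N, hN⟩ := ha ε hε lam hlam
  refine ⟨N, fun n hn => (hN n hn).trans_eq (measure_congr ?_)⟩
  filter_upwards [M.d_nonneg (x n) a] with ω h
  change (M.d (x n) a ω < ε) = (|M.d (x n) a ω - (0 : Ω → ℝ) ω| < ε)
  rw [Pi.zero_apply, sub_zero, abs_of_nonneg h]

/-- Random closed balls are closed in the `(ε,λ)`-topology. -/
theorem ae_dist_le_of_tendstoEL [IsProbabilityMeasure P] {x : ℕ → E} {a b : E} {g : Ω → ℝ}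
    (ha : M.TendstoEL x a) (h : ∀ᶠ m in atTop, ∀ᵐ ω ∂P, M.d (x m) b ω ≤ g ω) :
    ∀ᵐ ω ∂P, M.d a b ω ≤ g ω := by
  obtain ⟨ns, hns, hae⟩ := (M.tendstoInMeasure_dist_of_tendstoEL ha).exists_seq_tendsto_ae
  obtain ⟨N, hN⟩ := eventually_atTop.1 h
  have hle : ∀ᵐ ω ∂P, ∀ k, M.d a b ω ≤ M.d (x (ns (k + N))) a ω + g ω := by
    refine ae_all_iff.2 fun k => ?_
    filter_upwards [hN (ns (k + N)) (le_add_self.trans (hns.id_le _)),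
      M.d_triangle a (x (ns (k + N))) b] with ω hg htri
    rw [M.d_symm a (x (ns (k + N)))] at htri
    linarith
  filter_upwards [hae, hle] with ω hlim hle
  have h := (hlim.comp (tendsto_add_atTop_nat N)).add_const (g ω)
  rw [Pi.zero_apply, zero_add] at h
  exact ge_of_tendsto' h hle

theorem LscEL.ae_le_of_ae_tendsto [IsProbabilityMeasure P] (hlsc : M.LscEL φ) {x : ℕ → E}
    {a : E} (ha : M.TendstoEL x a) {f : ℕ → Ω → ℝ} {g : Ω → ℝ}
    (hf : ∀ n, AEStronglyMeasurable (f n) P) (hg : AEStronglyMeasurable g P)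
    (hφf : ∀ n, ∀ᵐ ω ∂P, φ (x n) ω ≤ f n ω)
    (hfg : ∀ᵐ ω ∂P, Tendsto (fun n => f n ω) atTop (𝓝 (g ω))) :
    ∀ᵐ ω ∂P, φ a ω ≤ g ω := by
  have hφr : ∀ n, ∀ᵐ ω ∂P, φ (x n) ω ≤ (AEEqFun.mk (f n) (hf n) ω : EReal) := fun n => by
    filter_upwards [hφf n, AEEqFun.coeFn_mk (f n) (hf n)] with ω h hω
    rwa [hω]
  filter_upwards [hlsc x _ a _ hφr ha (tendstoProb_mk_of_ae_tendsto hf hg hfg),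
    AEEqFun.coeFn_mk g hg] with ω h hω
  rwa [hω] at h

theorem cauchySeqEL_of_integral_mul_dist_le [IsProbabilityMeasure P] {w : Ω → ℝ}
    (hw : Measurable w) (hw_pos : ∀ ω, 0 < w ω) {x : ℕ → E} {b : ℕ → ℝ}
    (hb : Tendsto b atTop (𝓝 0))
    (h : ∀ n m, n ≤ m → Integrable (fun ω => w ω * M.d (x m) (x n) ω) P ∧
      ∫ ω, w ω * M.d (x m) (x n) ω ∂P ≤ b n) :
    M.CauchySeqEL x := by
  intro ε hε lam hlam
  obtain ⟨δ, hδ, hmeas⟩ := exists_pos_measure_le_lt_of_integral_mul_le (P := P) hw hw_pos hε hlam.1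
  obtain ⟨N, hN⟩ := eventually_atTop.1 (hb.eventually (Iio_mem_nhds hδ))
  have hle : ∀ m n, N ≤ n → n ≤ m →
      ENNReal.ofReal (1 - lam) < P {ω | M.d (x m) (x n) ω < ε} := by
    intro m n hn hnm
    obtain ⟨hint, hint_le⟩ := h n m hnm
    rw [ofReal_one_sub_lt_iff_measure_compl_lt
      (nullMeasurableSet_lt (AEEqFun.aemeasurable _) aemeasurable_const) hlam.1.le hlam.2.le]
    simpa only [compl_ofPred, not_lt] using
      hmeas _ (M.d_nonneg _ _) hint (hint_le.trans (hN n hn).le)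
  refine ⟨N, fun m hm n hn => ?_⟩
  rcases le_total n m with hnm | hmn
  · exact hle m n hn hnm
  · rw [M.d_symm]
    exact hle n m hm hmn

theorem integral_mul_dist_le_of_mem_caristiSet {w : Ω → ℝ} (hw : Measurable w)
    (hw_nonneg : ∀ ω, 0 ≤ w ω) {y z : E} (hy : ∀ᵐ ω ∂P, φ y ω < ⊤) (hz : ∀ᵐ ω ∂P, ⊥ < φ z ω)
    (hiy : Integrable (fun ω => w ω * (φ y ω).toReal) P)
    (hiz : Integrable (fun ω => w ω * (φ z ω).toReal) P) (h : z ∈ M.caristiSet φ y) :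
    Integrable (fun ω => w ω * M.d z y ω) P ∧ ∫ ω, w ω * M.d z y ω ∂P ≤
      ∫ ω, w ω * (φ y ω).toReal ∂P - ∫ ω, w ω * (φ z ω).toReal ∂P := by
  have hpt : ∀ᵐ ω ∂P, w ω * M.d z y ω ≤ w ω * (φ y ω).toReal - w ω * (φ z ω).toReal := by
    filter_upwards [M.ae_toReal_add_dist_le hz hy h] with ω hω
    rw [← mul_sub]
    exact mul_le_mul_of_nonneg_left (by linarith [hω.2]) (hw_nonneg ω)
  have hint : Integrable (fun ω => w ω * M.d z y ω) P := by
    refine (hiy.sub hiz).mono' (hw.aestronglyMeasurable.mul (AEEqFun.aestronglyMeasurable _)) ?_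
    filter_upwards [hpt, M.d_nonneg z y] with ω h hd
    rw [Real.norm_eq_abs, abs_of_nonneg (mul_nonneg (hw_nonneg ω) hd)]
    exact h
  refine ⟨hint, ?_⟩
  rw [← integral_sub hiy hiz]
  exact integral_mono_ae hint (hiy.sub hiz) hpt

/-- `Φ y = ∫ w * φ(y)`, with the weight `w = (1 + |ξ| + |φ(x0)|)⁻¹` keeping `w * φ` bounded
on `M.caristiSet φ x0`. -/
theorem exists_weight_potential [IsProbabilityMeasure P] (hbot : ∀ y, ∀ᵐ ω ∂P, ⊥ < φ y ω)
    {x0 : E} (hx0 : ∀ᵐ ω ∂P, φ x0 ω < ⊤) {ξ : L0 P}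
    (hξ : ∀ y, ∀ᵐ ω ∂P, (ξ ω : EReal) ≤ φ y ω) :
    ∃ w : Ω → ℝ, Measurable w ∧ (∀ ω, 0 < w ω) ∧ ∃ Φ : E → ℝ,
      BddBelow (Φ '' M.caristiSet φ x0) ∧ ∀ y ∈ M.caristiSet φ x0, ∀ z ∈ M.caristiSet φ y,
        Integrable (fun ω => w ω * M.d z y ω) P ∧ ∫ ω, w ω * M.d z y ω ∂P ≤ Φ y - Φ z := by
  have hmeas : ∀ y, Measurable fun ω => (φ y ω).toReal := fun y =>
    measurable_ereal_toReal.comp (φ y).stronglyMeasurable.measurable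
  set w : Ω → ℝ := fun ω => (1 + |ξ ω| + |(φ x0 ω).toReal|)⁻¹
  have hw : Measurable w :=
    ((measurable_const.add ξ.stronglyMeasurable.measurable.abs).add (hmeas x0).abs).inv
  have hbound : ∀ y ∈ M.caristiSet φ x0, ∀ᵐ ω ∂P, |w ω * (φ y ω).toReal| ≤ 1 := by
    intro y hy
    filter_upwards [M.ae_toReal_add_dist_le (hbot y) hx0 hy, hξ y, M.d_nonneg y x0]
      with ω h hξy hd
    refine abs_inv_mul_le_one ?_ (by linarith [h.2])
    simpa using EReal.toReal_le_toReal hξy (EReal.coe_ne_bot _) h.1.ne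
  have hint : ∀ y ∈ M.caristiSet φ x0, Integrable (fun ω => w ω * (φ y ω).toReal) P :=
    fun y hy => (integrable_const 1).mono' (hw.mul (hmeas y)).aestronglyMeasurable
      (by simpa only [Real.norm_eq_abs] using hbound y hy)
  refine ⟨w, hw, fun ω => by positivity, fun y => ∫ ω, w ω * (φ y ω).toReal ∂P, ⟨-1, ?_⟩,
    fun y hy z hz => ?_⟩
  · rintro _ ⟨y, hy, rfl⟩
    simpa using integral_mono_ae (integrable_const (-1)) (hint y hy)
      ((hbound y hy).mono fun ω h => (abs_le.1 h).1)
  · exact M.integral_mul_dist_le_of_mem_caristiSet hw (fun ω => by positivity)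
      ((M.ae_toReal_add_dist_le (hbot y) hx0 hy).mono fun ω h => h.1) (hbot z) (hint y hy)
      (hint z (caristiSet_subset hy hz)) hz

theorem mem_caristiSet_of_tendstoEL [IsProbabilityMeasure P] (hlsc : M.LscEL φ)
    (hbot : ∀ y, ∀ᵐ ω ∂P, ⊥ < φ y ω) {x : ℕ → E}
    (hchain : ∀ n m, n ≤ m → x m ∈ M.caristiSet φ (x n)) (htop : ∀ᵐ ω ∂P, φ (x 0) ω < ⊤)
    {ξ : Ω → ℝ} (hξ : ∀ n, ∀ᵐ ω ∂P, (ξ ω : EReal) ≤ φ (x n) ω) {a : E}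
    (ha : M.TendstoEL x a) (n : ℕ) : a ∈ M.caristiSet φ (x n) := by
  set f : ℕ → Ω → ℝ := fun n ω => (φ (x n) ω).toReal
  have hf : ∀ n, Measurable (f n) := fun n =>
    measurable_ereal_toReal.comp (φ (x n)).stronglyMeasurable.measurable
  have hreal : ∀ n m, n ≤ m → ∀ᵐ ω ∂P, φ (x m) ω < ⊤ ∧ f m ω + M.d (x m) (x n) ω ≤ f n ω :=
    fun n m hnm => M.ae_toReal_add_dist_le (hbot _)
      ((M.ae_toReal_add_dist_le (hbot _) htop (hchain 0 n n.zero_le)).mono fun ω h => h.1)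
      (hchain n m hnm)
  have hfin : ∀ᵐ ω ∂P, ∀ n, φ (x n) ω = f n ω := ae_all_iff.2 fun n => by
    filter_upwards [hreal 0 n n.zero_le, hbot (x n)] with ω h hb
    exact (EReal.coe_toReal h.1.ne hb.ne').symm
  have hanti : ∀ᵐ ω ∂P, ∀ n, f (n + 1) ω ≤ f n ω := ae_all_iff.2 fun n => by
    filter_upwards [hreal n (n + 1) n.le_succ, M.d_nonneg (x (n + 1)) (x n)] with ω h hd
    linarith [h.2]
  have hbdd : ∀ᵐ ω ∂P, BddBelow (range fun n => f n ω) := by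
    filter_upwards [hfin, ae_all_iff.2 hξ] with ω hfin hξ
    exact ⟨ξ ω, forall_mem_range.2 fun n => by exact_mod_cast (hfin n) ▸ hξ n⟩
  set s : Ω → ℝ := fun ω => ⨅ n, f n ω
  have hfs : ∀ᵐ ω ∂P, Tendsto (fun n => f n ω) atTop (𝓝 (s ω)) := by
    filter_upwards [hanti, hbdd] with ω hanti hbdd
    exact tendsto_atTop_ciInf (antitone_nat_of_succ_le hanti) hbdd
  have hφa : ∀ᵐ ω ∂P, φ a ω ≤ s ω :=
    hlsc.ae_le_of_ae_tendsto ha (fun n => (hf n).aestronglyMeasurable)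
      (Measurable.iInf hf).aestronglyMeasurable
      (fun n => hfin.mono fun ω h => (h n).le) hfs
  have hdist : ∀ᵐ ω ∂P, M.d a (x n) ω ≤ f n ω - s ω := by
    refine M.ae_dist_le_of_tendstoEL ha (eventually_atTop.2 ⟨n, fun m hm => ?_⟩)
    filter_upwards [hreal n m hm, hbdd] with ω h hbdd
    linarith [h.2, ciInf_le hbdd m]
  filter_upwards [hφa, hdist, hfin] with ω hφa hdist hfin
  calc φ a ω + (M.d a (x n) ω : EReal) ≤ ((s ω + M.d a (x n) ω : ℝ) : EReal) := by
        rw [EReal.coe_add]; gcongr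
    _ ≤ φ (x n) ω := by rw [hfin n]; exact_mod_cast (by linarith)

theorem eq_of_integral_mul_dist_nonpos {w : Ω → ℝ} (hw_pos : ∀ ω, 0 < w ω) {p q : E}
    (hint : Integrable (fun ω => w ω * M.d p q ω) P) (h : ∫ ω, w ω * M.d p q ω ∂P ≤ 0) :
    p = q := by
  have hnonneg : 0 ≤ᵐ[P] fun ω => w ω * M.d p q ω :=
    (M.d_nonneg p q).mono fun ω hd => mul_nonneg (hw_pos ω).le hd
  have hzero := (integral_eq_zero_iff_of_nonneg_ae hnonneg hint).1
    (h.antisymm (integral_nonneg_of_ae hnonneg))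
  exact M.eq_of_ae_dist_eq_zero (hzero.mono fun ω h => (mul_eq_zero.1 h).resolve_left
    (hw_pos ω).ne')

theorem exists_forall_mem_caristiSet_eq [IsProbabilityMeasure P] (hcomp : M.CompleteEL)
    (hlsc : M.LscEL φ) (hbot : ∀ y, ∀ᵐ ω ∂P, ⊥ < φ y ω) {x0 : E} (hx0 : ∀ᵐ ω ∂P, φ x0 ω < ⊤)
    {ξ : L0 P} (hξ : ∀ y, ∀ᵐ ω ∂P, (ξ ω : EReal) ≤ φ y ω) :
    ∃ a, ∀ v ∈ M.caristiSet φ a, v = a := by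
  obtain ⟨w, hw, hw_pos, Φ, hΦbdd, hΦ⟩ := M.exists_weight_potential hbot hx0 hξ
  obtain ⟨x, hx0S, hxS, hxΦ⟩ := exists_seq_forall_lt_add (M.caristiSet φ) mem_caristiSet_self
    (fun _ _ => caristiSet_subset) Φ hΦbdd (fun n => pow_pos (by norm_num : (0 : ℝ) < 1 / 2) n)
  have hchain : ∀ n m, n ≤ m → x m ∈ M.caristiSet φ (x n) := fun n m hnm => by
    induction m, hnm using Nat.le_induction with
    | base => exact mem_caristiSet_self _
    | succ m _ ih => exact caristiSet_subset ih (hxS m)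
  have hxS0 : ∀ n, x n ∈ M.caristiSet φ x0 := fun n => caristiSet_subset hx0S (hchain 0 n n.zero_le)
  have hcauchy : M.CauchySeqEL x := M.cauchySeqEL_of_integral_mul_dist_le hw hw_pos
    (tendsto_pow_atTop_nhds_zero_of_lt_one (r := (1 / 2 : ℝ)) (by norm_num) (by norm_num))
    fun n m hnm =>
      have h := hΦ _ (hxS0 n) _ (hchain n m hnm)
      ⟨h.1, by linarith [h.2, hxΦ n (x m) (hchain n m hnm)]⟩
  obtain ⟨a, ha⟩ := hcomp x hcauchy
  have haS : ∀ n, a ∈ M.caristiSet φ (x n) := M.mem_caristiSet_of_tendstoEL hlsc hbot hchain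
    ((M.ae_toReal_add_dist_le (hbot _) hx0 (hxS0 0)).mono fun ω h => h.1) (fun n => hξ _) ha
  refine ⟨a, fun v hv => ?_⟩
  have hΦv : Φ a ≤ Φ v := by
    refine le_of_forall_pos_lt_add fun ε hε => ?_
    obtain ⟨n, hn⟩ := exists_pow_lt_of_lt_one hε (by norm_num : (1 / 2 : ℝ) < 1)
    have ha_le := hΦ _ (hxS0 n) a (haS n)
    have hnonneg : 0 ≤ ∫ ω, w ω * M.d a (x n) ω ∂P :=
      integral_nonneg_of_ae ((M.d_nonneg _ _).mono fun ω hd => mul_nonneg (hw_pos ω).le hd)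
    linarith [hxΦ n v (caristiSet_subset (haS n) hv)]
  obtain ⟨hint, hle⟩ := hΦ a (caristiSet_subset hx0S (haS 0)) v hv
  exact M.eq_of_integral_mul_dist_nonpos hw_pos hint (by linarith)

end RMSpace

/-- Theorem 2.12: Caristi's fixed point theorem on a
`d_{ε,λ}`-complete random metric space. -/
theorem caristi_RM_EL
    {Ω : Type*} [MeasurableSpace Ω] {P : Measure Ω} [IsProbabilityMeasure P]
    {E : Type*} (M : RMSpace P E) (hcomp : M.CompleteEL)
    (φ : E → L0e P)
    (hproper : ProperOn φ Set.univ) (hlsc : M.LscEL φ) (hbdd : BddBelowOn φ Set.univ)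
    (T : E → E)
    (hT : ∀ u : E, ∀ᵐ ω ∂P, φ (T u) ω + (M.d (T u) u ω : EReal) ≤ φ u ω) :
    ∃ u : E, T u = u := by
  obtain ⟨hbot, x0, -, hx0⟩ := hproper
  obtain ⟨ξ, hξ⟩ := hbdd
  obtain ⟨a, ha⟩ := M.exists_forall_mem_caristiSet_eq hcomp hlsc (fun y => hbot y trivial) hx0
    (fun y => hξ y trivial)
  exact ⟨a, ha (T a) (hT a)⟩

end GYY
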